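/- arXiv:1005.2296 — 2 statements merged into one kernel-verified Lean document; each statement's English description precedes it below -/
import Mathlib

section
/- Let d be a positive integer, (β_n)_{n≥0} a sequence of nonnegative reals with Q(t) := Σ_{n=0}^∞ β_n t^n, and p > 1. On a probability space, let N be a random variable taking values in the nonnegative integers with P(N = n) = (p−1)/p^{n+1} for every n ∈ ℕ, and let (X_j)_{j≥1} be i.i.d. ℝ^d-valued random vectors, independent of N, with E[‖X_1‖²] ≤ B for some B ≥ 0 such that Q(pB) < ∞. Then E[ β_N · (p^{2N+2}/(p−1)²) · ∏_{j=1}^N ‖X_j‖² ] ≤ (p/(p−1)) · Q(pB). -/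
/-!
Since `N` is independent of the whole sequence `X`, the expectation splits over the events
`{N = n}` as `∑ₙ P(N = n) · E[wₙ ∏_{j<n} ‖X_j‖²]` with `wₙ = βₙ p^(2n+2)/(p-1)²`. By independence
and identical distribution of the `X_j` the inner expectation is at most `wₙ Bⁿ`, and
`P(N = n) wₙ Bⁿ = p/(p-1) · βₙ (pB)ⁿ`, whose sum is `p/(p-1) · Q(pB)`.
-/

open MeasureTheory ProbabilityTheory
open scoped ENNReal

section

variable {Ω β γ : Type*} [MeasurableSpace Ω] {μ : Measure Ω}
  [MeasurableSpace β] [MeasurableSpace γ]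

theorem MeasureTheory.lintegral_eq_tsum_setLIntegral_fiber [Countable β]
    [MeasurableSingletonClass β] {N : Ω → β} (hN : Measurable N) (F : β → Ω → ℝ≥0∞) :
    ∫⁻ ω, F (N ω) ω ∂μ = ∑' b, ∫⁻ ω in N ⁻¹' {b}, F b ω ∂μ := by
  have hcover : (⋃ b, N ⁻¹' {b}) = Set.univ := by
    ext ω; simp
  rw [← setLIntegral_univ, ← hcover,
    lintegral_iUnion (fun b => hN (measurableSet_singleton b)) (pairwise_disjoint_fiber N)]
  refine tsum_congr fun b => setLIntegral_congr_fun (hN (measurableSet_singleton b)) ?_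
  intro ω hω
  simp only [Set.mem_singleton_iff.mp hω]

theorem ProbabilityTheory.IndepFun.setLIntegral_preimage_eq_mul {N : Ω → β} {Z : Ω → γ}
    (h : IndepFun N Z μ) (hN : Measurable N) (hZ : Measurable Z) {S : Set β}
    (hS : MeasurableSet S) {g : γ → ℝ≥0∞} (hg : Measurable g) :
    ∫⁻ ω in N ⁻¹' S, g (Z ω) ∂μ = μ (N ⁻¹' S) * ∫⁻ ω, g (Z ω) ∂μ := by
  set χ : β → ℝ≥0∞ := S.indicator fun _ => 1
  have hχ : Measurable χ := measurable_const.indicator hS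
  have hsplit : (N ⁻¹' S).indicator (fun ω => g (Z ω)) = (χ ∘ N) * (g ∘ Z) := by
    ext ω; by_cases hω : N ω ∈ S <;> simp [χ, hω]
  rw [← lintegral_indicator (hN hS), hsplit,
    lintegral_mul_eq_lintegral_mul_lintegral_of_indepFun (hχ.comp hN) (hg.comp hZ)
      (h.comp hχ hg)]
  exact congrArg (· * _) (lintegral_indicator_one (hN hS))

theorem ProbabilityTheory.IndepFun.lintegral_comp_eq_tsum [Countable β]
    [MeasurableSingletonClass β] {N : Ω → β} {Z : Ω → γ} (h : IndepFun N Z μ)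
    (hN : Measurable N) (hZ : Measurable Z) {F : β → γ → ℝ≥0∞} (hF : ∀ b, Measurable (F b)) :
    ∫⁻ ω, F (N ω) (Z ω) ∂μ = ∑' b, μ (N ⁻¹' {b}) * ∫⁻ ω, F b (Z ω) ∂μ := by
  rw [lintegral_eq_tsum_setLIntegral_fiber hN (fun b ω => F b (Z ω))]
  exact tsum_congr fun b =>
    h.setLIntegral_preimage_eq_mul hN hZ (measurableSet_singleton b) (hF b)

end

theorem ProbabilityTheory.iIndepFun.lintegral_prod_le_pow {Ω ι : Type*} [MeasurableSpace Ω]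
    {μ : Measure Ω} {Y : ι → Ω → ℝ≥0∞} (hY : iIndepFun Y μ) (hYm : ∀ i, Measurable (Y i))
    {b : ℝ≥0∞} (hb : ∀ i, ∫⁻ ω, Y i ω ∂μ ≤ b) (s : Finset ι) :
    ∫⁻ ω, ∏ i ∈ s, Y i ω ∂μ ≤ b ^ s.card := by
  rw [lintegral_prod_eq_prod_lintegral_of_indepFun s Y hY hYm]
  exact Finset.prod_le_pow_card s _ b fun i _ => hb i

theorem ProbabilityTheory.iIndepFun.lintegral_prod_ofReal_norm_sq_le_pow {Ω ι E : Type*}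
    [MeasurableSpace Ω] {μ : Measure Ω} [NormedAddCommGroup E] [MeasurableSpace E]
    [OpensMeasurableSpace E] {X : ι → Ω → E} (hX : iIndepFun X μ) (hXm : ∀ i, Measurable (X i))
    {i₀ : ι} (hXid : ∀ i, μ.map (X i) = μ.map (X i₀))
    (hXsq : Integrable (fun ω => ‖X i₀ ω‖ ^ 2) μ) {B : ℝ} (hB : ∫ ω, ‖X i₀ ω‖ ^ 2 ∂μ ≤ B)
    (s : Finset ι) :
    ∫⁻ ω, ∏ i ∈ s, ENNReal.ofReal (‖X i ω‖ ^ 2) ∂μ ≤ ENNReal.ofReal B ^ s.card := by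
  have hsq : Measurable fun x : E => ENNReal.ofReal (‖x‖ ^ 2) :=
    (measurable_norm.pow_const 2).ennreal_ofReal
  refine (hX.comp _ fun _ => hsq).lintegral_prod_le_pow (fun i => hsq.comp (hXm i)) (fun i => ?_) s
  have hident : IdentDistrib (X i) (X i₀) μ μ :=
    ⟨(hXm i).aemeasurable, (hXm i₀).aemeasurable, hXid i⟩
  calc ∫⁻ ω, ENNReal.ofReal (‖X i ω‖ ^ 2) ∂μ = ∫⁻ ω, ENNReal.ofReal (‖X i₀ ω‖ ^ 2) ∂μ :=
        (hident.comp hsq).lintegral_eq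
    _ = ENNReal.ofReal (∫ ω, ‖X i₀ ω‖ ^ 2 ∂μ) :=
        (ofReal_integral_eq_lintegral_ofReal hXsq (.of_forall fun _ => sq_nonneg _)).symm
    _ ≤ ENNReal.ofReal B := ENNReal.ofReal_le_ofReal hB

theorem geometric_pmf_mul_weight_mul_pow {p : ℝ} (hp : 1 < p) (β B : ℝ) (n : ℕ) :
    (p - 1) / p ^ (n + 1) * (β * (p ^ (2 * n + 2) / (p - 1) ^ 2) * B ^ n)
      = p / (p - 1) * (β * (p * B) ^ n) := by
  have hp0 : p ≠ 0 := by positivity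
  have hp1 : p - 1 ≠ 0 := sub_ne_zero.mpr hp.ne'
  rw [show 2 * n + 2 = (n + 1) + (n + 1) by ring, pow_add, mul_pow]
  field_simp
  ring

theorem feature_map_estimate_second_moment_general
    {Ω : Type*} [MeasurableSpace Ω] (μ : Measure Ω)
    (d : ℕ)
    (β : ℕ → ℝ) (hβ : ∀ n, 0 ≤ β n)
    (p : ℝ) (hp : 1 < p)
    (N : Ω → ℕ) (hN : Measurable N)
    (hNdist : ∀ n : ℕ, μ {ω | N ω = n} = ENNReal.ofReal ((p - 1) / p ^ (n + 1)))
    (X : ℕ → Ω → EuclideanSpace ℝ (Fin d)) (hXm : ∀ j, Measurable (X j))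
    (hXindep : iIndepFun X μ)
    (hXid : ∀ j, μ.map (X j) = μ.map (X 0))
    (hNX : IndepFun N (fun ω => fun j => X j ω) μ)
    (B : ℝ)
    (hXsq : Integrable (fun ω => ‖X 0 ω‖ ^ 2) μ)
    (hX2 : ∫ ω, ‖X 0 ω‖ ^ 2 ∂μ ≤ B)
    (hQ : Summable (fun n : ℕ => β n * (p * B) ^ n)) :
    ∫⁻ ω, ENNReal.ofReal
        (β (N ω) * (p ^ (2 * N ω + 2) / (p - 1) ^ 2) *
          ∏ j ∈ Finset.range (N ω), ‖X j ω‖ ^ 2) ∂μ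
      ≤ ENNReal.ofReal ((p / (p - 1)) * ∑' n : ℕ, β n * (p * B) ^ n) := by
  have hB : 0 ≤ B := (integral_nonneg fun _ => sq_nonneg _).trans hX2
  have hp1 : 0 ≤ p - 1 := by linarith
  set w : ℕ → ℝ := fun n => β n * (p ^ (2 * n + 2) / (p - 1) ^ 2)
  have hw : ∀ n, 0 ≤ w n := fun n => mul_nonneg (hβ n) (by positivity)
  set F : ℕ → (ℕ → EuclideanSpace ℝ (Fin d)) → ℝ≥0∞ :=
    fun n v => ENNReal.ofReal (w n) * ∏ j ∈ Finset.range n, ENNReal.ofReal (‖v j‖ ^ 2)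
  have hF : ∀ n, Measurable (F n) := fun n => by fun_prop
  calc _ = ∫⁻ ω, F (N ω) (fun j => X j ω) ∂μ := by
        refine lintegral_congr fun ω => ?_
        rw [ENNReal.ofReal_mul (hw _), ENNReal.ofReal_prod_of_nonneg fun _ _ => sq_nonneg _]
    _ = ∑' n, μ (N ⁻¹' {n}) * ∫⁻ ω, F n (fun j => X j ω) ∂μ :=
        hNX.lintegral_comp_eq_tsum hN (measurable_pi_lambda _ hXm) hF
    _ ≤ ∑' n, ENNReal.ofReal ((p - 1) / p ^ (n + 1)) *
          (ENNReal.ofReal (w n) * ENNReal.ofReal B ^ n) := by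
        refine ENNReal.tsum_le_tsum fun n => ?_
        rw [lintegral_const_mul _ (by fun_prop), show μ (N ⁻¹' {n}) = _ from hNdist n]
        gcongr
        simpa using hXindep.lintegral_prod_ofReal_norm_sq_le_pow hXm hXid hXsq hX2 (.range n)
    _ = ∑' n, ENNReal.ofReal (p / (p - 1) * (β n * (p * B) ^ n)) := by
        refine tsum_congr fun n => ?_
        rw [← geometric_pmf_mul_weight_mul_pow hp, ← ENNReal.ofReal_pow hB,
          ← ENNReal.ofReal_mul (hw n), ← ENNReal.ofReal_mul (by positivity)]
    _ = _ := by
        rw [← ENNReal.ofReal_tsum_of_nonneg (fun n => by have := hβ n; positivity)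
          (hQ.mul_left _), tsum_mul_left]

/-- **Lemma 3 (second-moment bound for the feature-map estimate).** Fix `p > 1`,
nonnegative coefficients `β` with `Q(t) = Σ β_n tⁿ`, a geometric random variable `N`
with parameter `p`, and i.i.d. random vectors `(X_j)` in `ℝ^d` independent of `N`
with `E[‖X₁‖²] ≤ B` and `Q(pB) < ∞`. Then
`E[β_N · (p^(2N+2)/(p-1)²) · ∏_{j=1}^N ‖X_j‖²] ≤ (p/(p-1)) · Q(pB)`. -/
theorem feature_map_estimate_second_moment
    {Ω : Type*} [MeasurableSpace Ω] (μ : Measure Ω) [IsProbabilityMeasure μ]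
    (d : ℕ) (hd : 0 < d)
    (β : ℕ → ℝ) (hβ : ∀ n, 0 ≤ β n)
    (p : ℝ) (hp : 1 < p)
    (N : Ω → ℕ) (hN : Measurable N)
    (hNdist : ∀ n : ℕ, μ {ω | N ω = n} = ENNReal.ofReal ((p - 1) / p ^ (n + 1)))
    (X : ℕ → Ω → EuclideanSpace ℝ (Fin d)) (hXm : ∀ j, Measurable (X j))
    (hXindep : iIndepFun X μ)
    (hXid : ∀ j, μ.map (X j) = μ.map (X 0))
    (hNX : IndepFun N (fun ω => fun j => X j ω) μ)
    (B : ℝ) (hB : 0 ≤ B)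
    (hXsq : Integrable (fun ω => ‖X 0 ω‖ ^ 2) μ)
    (hX2 : ∫ ω, ‖X 0 ω‖ ^ 2 ∂μ ≤ B)
    (hQ : Summable (fun n : ℕ => β n * (p * B) ^ n)) :
    ∫⁻ ω, ENNReal.ofReal
        (β (N ω) * (p ^ (2 * N ω + 2) / (p - 1) ^ 2) *
          ∏ j ∈ Finset.range (N ω), ‖X j ω‖ ^ 2) ∂μ
      ≤ ENNReal.ofReal ((p / (p - 1)) * ∑' n : ℕ, β n * (p * B) ^ n) :=
  feature_map_estimate_second_moment_general μ d β hβ p hp N hN hNdist X hXm hXindep hXid hNX B hXsq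
    hX2 hQ
end

section
/- Let H be a real Hilbert space, p > 1, and let ℓ' : ℝ → ℝ be given by a power series ℓ'(a) = Σ_{n=0}^∞ γ_n a^n, with ℓ'₊(a) := Σ_{n=0}^∞ |γ_n| a^n. Let y ∈ {−1, +1}, let w ∈ H with ‖w‖² ≤ B_w, and on a probability space let N be a random variable taking values in the nonnegative integers with P(N = n) = (p−1)/p^{n+1} for every n ∈ ℕ, and let (Φ_j)_{j≥1} be i.i.d. H-valued random vectors, independent of N, with E[‖Φ_1‖²] ≤ B_Ψ, where ℓ'₊(√(p·B_w·B_Ψ)) < ∞. Define g̃ := y · γ_N · (p^{N+1}/(p−1)) · ∏_{j=1}^N (y·⟨w, Φ_j⟩). Then E[g̃²] ≤ (p/(p−1)) · ℓ'₊(√(p·B_w·B_Ψ))². -/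
/-!
Squaring removes the signs `y`, and since `N` is independent of the i.i.d. vectors `Φ_j`, the
second moment splits over the events `{N = n}`. On `{N = n}` the importance weight
`p^(n+1)/(p-1)`, squared and weighted by `P(N = n) = (p-1)/p^(n+1)`, leaves `p/(p-1) · p^n`, and
`E[∏_{j<n} ⟪w, Φ_j⟫²] ≤ (B_w B_Ψ)^n` by Cauchy–Schwarz and independence. Hence
`E[g̃²] ≤ p/(p-1) · Σ (|γ_n| s^n)²` with `s = √(p B_w B_Ψ)`, and `Σ a_n² ≤ (Σ a_n)²`.
-/

open MeasureTheory ProbabilityTheory Finset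
open scoped ENNReal RealInnerProductSpace

theorem sq_mul_mul_prod_mul_of_sq_eq_one {M ι : Type*} [CommMonoid M] {y : M} (hy : y ^ 2 = 1)
    (a : M) (b : ι → M) (s : Finset ι) :
    (y * a * ∏ j ∈ s, (y * b j)) ^ 2 = a ^ 2 * ∏ j ∈ s, b j ^ 2 := by
  rw [mul_pow, mul_pow, ← prod_pow]
  simp only [mul_pow, hy, one_mul]

theorem ENNReal.ofReal_div_pow_succ_mul_sq_mul_pow_eq {p : ℝ} (hp : 1 < p) {b : ℝ} (hb : 0 ≤ b)
    (g : ℝ) (n : ℕ) :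
    ENNReal.ofReal ((p - 1) / p ^ (n + 1))
        * (ENNReal.ofReal ((g * (p ^ (n + 1) / (p - 1))) ^ 2) * ENNReal.ofReal b ^ n)
      = ENNReal.ofReal (p / (p - 1)) * ENNReal.ofReal (|g| * Real.sqrt (p * b) ^ n) ^ 2 := by
  have hp0 : 0 < p := by linarith
  have hp1 : 0 < p - 1 := by linarith
  rw [← ENNReal.ofReal_pow hb, ← ENNReal.ofReal_mul (sq_nonneg _),
    ← ENNReal.ofReal_mul (by positivity), ← ENNReal.ofReal_pow (by positivity),
    ← ENNReal.ofReal_mul (by positivity)]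
  congr 1
  rw [mul_pow |g|, sq_abs, ← pow_mul, mul_comm n 2, pow_mul, Real.sq_sqrt (by positivity)]
  field_simp
  ring

theorem ENNReal.tsum_sq_le_sq_tsum {ι : Type*} (a : ι → ℝ≥0∞) :
    ∑' i, a i ^ 2 ≤ (∑' i, a i) ^ 2 :=
  calc ∑' i, a i ^ 2 ≤ ∑' i, a i * ∑' j, a j :=
        ENNReal.tsum_le_tsum fun i => by rw [sq]; gcongr; exact ENNReal.le_tsum i
    _ = (∑' i, a i) ^ 2 := by rw [ENNReal.tsum_mul_right, sq]

theorem ENNReal.tsum_ofReal_sq_le_ofReal_sq_tsum {ι : Type*} {a : ι → ℝ} (ha : ∀ i, 0 ≤ a i)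
    (hs : Summable a) :
    ∑' i, ENNReal.ofReal (a i) ^ 2 ≤ ENNReal.ofReal ((∑' i, a i) ^ 2) := by
  rw [ENNReal.ofReal_pow (tsum_nonneg ha), ENNReal.ofReal_tsum_of_nonneg ha hs]
  exact ENNReal.tsum_sq_le_sq_tsum _

section Moments

variable {Ω : Type*} [MeasurableSpace Ω] {μ : Measure Ω}
  {H : Type*} [NormedAddCommGroup H] [InnerProductSpace ℝ H]

theorem lintegral_ofReal_inner_sq_le (w : H) (X : Ω → H) :
    ∫⁻ ω, ENNReal.ofReal (⟪w, X ω⟫ ^ 2) ∂μ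
      ≤ ENNReal.ofReal (‖w‖ ^ 2) * ∫⁻ ω, ENNReal.ofReal (‖X ω‖ ^ 2) ∂μ := by
  rw [← lintegral_const_mul' _ _ ENNReal.ofReal_ne_top]
  refine lintegral_mono fun ω => ?_
  rw [← ENNReal.ofReal_mul (sq_nonneg _), ← mul_pow, ← sq_abs]
  gcongr
  exact abs_real_inner_le_norm w (X ω)

theorem lintegral_prod_ofReal_inner_sq_le_pow [MeasurableSpace H] [BorelSpace H] {w : H}
    {Bw : ℝ} (hw : ‖w‖ ^ 2 ≤ Bw) {Φ : ℕ → Ω → H} (hΦm : ∀ j, Measurable (Φ j))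
    (hΦindep : iIndepFun Φ μ) (hΦid : ∀ j, μ.map (Φ j) = μ.map (Φ 0)) {BΨ : ℝ}
    (hΦsq : Integrable (fun ω => ‖Φ 0 ω‖ ^ 2) μ) (hΦ2 : ∫ ω, ‖Φ 0 ω‖ ^ 2 ∂μ ≤ BΨ) (n : ℕ) :
    ∫⁻ ω, ∏ j ∈ range n, ENNReal.ofReal (⟪w, Φ j ω⟫ ^ 2) ∂μ ≤ ENNReal.ofReal (Bw * BΨ) ^ n := by
  have hf : Measurable fun x : H => ENNReal.ofReal (⟪w, x⟫ ^ 2) := by fun_prop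
  have hindep : iIndepFun (fun j ω => ENNReal.ofReal (⟪w, Φ j ω⟫ ^ 2)) μ :=
    hΦindep.comp (fun _ x => ENNReal.ofReal (⟪w, x⟫ ^ 2)) fun _ => hf
  rw [lintegral_prod_eq_prod_lintegral_of_indepFun _ _ hindep fun j => hf.comp (hΦm j)]
  refine (prod_le_pow_card _ _ _ fun j _ => ?_).trans_eq (by rw [card_range])
  have hj : IdentDistrib (Φ j) (Φ 0) μ μ :=
    ⟨(hΦm j).aemeasurable, (hΦm 0).aemeasurable, hΦid j⟩
  calc ∫⁻ ω, ENNReal.ofReal (⟪w, Φ j ω⟫ ^ 2) ∂μ = ∫⁻ ω, ENNReal.ofReal (⟪w, Φ 0 ω⟫ ^ 2) ∂μ :=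
        (hj.comp hf).lintegral_eq
    _ ≤ ENNReal.ofReal (‖w‖ ^ 2) * ∫⁻ ω, ENNReal.ofReal (‖Φ 0 ω‖ ^ 2) ∂μ :=
        lintegral_ofReal_inner_sq_le w (Φ 0)
    _ ≤ ENNReal.ofReal Bw * ENNReal.ofReal BΨ := by
        rw [← ofReal_integral_eq_lintegral_ofReal hΦsq (ae_of_all _ fun ω => sq_nonneg _)]
        gcongr
    _ = ENNReal.ofReal (Bw * BΨ) := (ENNReal.ofReal_mul ((sq_nonneg _).trans hw)).symm

end Moments

theorem lintegral_comp_of_indepFun_nat_eq_tsum {Ω E : Type*} [MeasurableSpace Ω]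
    [MeasurableSpace E] {μ : Measure Ω} {N : Ω → ℕ} {V : Ω → E} (hN : Measurable N)
    (hV : Measurable V) (hNV : IndepFun N V μ) {F : ℕ → E → ℝ≥0∞}
    (hF : ∀ n, Measurable (F n)) :
    ∫⁻ ω, F (N ω) (V ω) ∂μ = ∑' n, μ {ω | N ω = n} * ∫⁻ ω, F n (V ω) ∂μ := by
  set φ : ℕ → ℕ → ℝ≥0∞ := fun n => ({n} : Set ℕ).indicator 1
  have hsplit : ∀ ω, F (N ω) (V ω) = ∑' n, φ n (N ω) * F n (V ω) := fun ω => by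
    rw [tsum_eq_single (N ω) fun n hn => by simp [φ, Ne.symm hn]]
    simp [φ]
  have hφ : ∀ n, Measurable fun ω => φ n (N ω) := fun n => (measurable_from_nat (f := φ n)).comp hN
  calc ∫⁻ ω, F (N ω) (V ω) ∂μ = ∫⁻ ω, ∑' n, φ n (N ω) * F n (V ω) ∂μ := lintegral_congr hsplit
    _ = ∑' n, ∫⁻ ω, φ n (N ω) * F n (V ω) ∂μ :=
        lintegral_tsum fun n => ((hφ n).mul ((hF n).comp hV)).aemeasurable
    _ = ∑' n, μ {ω | N ω = n} * ∫⁻ ω, F n (V ω) ∂μ := tsum_congr fun n => by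
        have hindep : IndepFun (fun ω => φ n (N ω)) (fun ω => F n (V ω)) μ :=
          hNV.comp (measurable_from_nat (f := φ n)) (hF n)
        rw [lintegral_mul_eq_lintegral_mul_lintegral_of_indepFun'' (g := fun ω => F n (V ω))
          (hφ n).aemeasurable ((hF n).comp hV).aemeasurable hindep]
        congr 1
        simp_rw [φ, ← Set.indicator_comp_right N (g := (1 : ℕ → ℝ≥0∞))]
        exact lintegral_indicator_one (hN (measurableSet_singleton n))

theorem grad_length_estimate_second_moment_general
    {Ω : Type*} [MeasurableSpace Ω] (μ : Measure Ω)
    {H : Type*} [NormedAddCommGroup H] [InnerProductSpace ℝ H]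
    [MeasurableSpace H] [BorelSpace H]
    (p : ℝ) (hp : 1 < p)
    (γ : ℕ → ℝ)
    (y : ℝ) (hy : y = 1 ∨ y = -1)
    (w : H) (Bw : ℝ) (hw : ‖w‖ ^ 2 ≤ Bw)
    (N : Ω → ℕ) (hN : Measurable N)
    (hNdist : ∀ n : ℕ, μ {ω | N ω = n} = ENNReal.ofReal ((p - 1) / p ^ (n + 1)))
    (Φ : ℕ → Ω → H) (hΦm : ∀ j, Measurable (Φ j))
    (hΦindep : iIndepFun Φ μ)
    (hΦid : ∀ j, μ.map (Φ j) = μ.map (Φ 0))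
    (hNΦ : IndepFun N (fun ω => fun j => Φ j ω) μ)
    (BΨ : ℝ) (hΦsq : Integrable (fun ω => ‖Φ 0 ω‖ ^ 2) μ)
    (hΦ2 : ∫ ω, ‖Φ 0 ω‖ ^ 2 ∂μ ≤ BΨ)
    (hplus : Summable (fun n : ℕ => |γ n| * Real.sqrt (p * Bw * BΨ) ^ n)) :
    ∫⁻ ω, ENNReal.ofReal
        ((y * γ (N ω) * (p ^ (N ω + 1) / (p - 1)) *
          ∏ j ∈ Finset.range (N ω), (y * ⟪w, Φ j ω⟫)) ^ 2) ∂μ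
      ≤ ENNReal.ofReal ((p / (p - 1)) *
          (∑' n : ℕ, |γ n| * Real.sqrt (p * Bw * BΨ) ^ n) ^ 2) := by
  have hBw : 0 ≤ Bw := (sq_nonneg _).trans hw
  have hBΨ : 0 ≤ BΨ := (integral_nonneg fun ω => sq_nonneg _).trans hΦ2
  have hy2 : y ^ 2 = 1 := by rcases hy with rfl | rfl <;> norm_num
  set a : ℕ → ℝ := fun n => |γ n| * Real.sqrt (p * Bw * BΨ) ^ n
  set F : ℕ → (ℕ → H) → ℝ≥0∞ := fun n v => ENNReal.ofReal ((γ n * (p ^ (n + 1) / (p - 1))) ^ 2)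
    * ∏ j ∈ range n, ENNReal.ofReal (⟪w, v j⟫ ^ 2)
  have hF : ∀ n, Measurable (F n) := fun n => by fun_prop
  have hterm : ∀ n, μ {ω | N ω = n} * ∫⁻ ω, F n (fun j => Φ j ω) ∂μ
      ≤ ENNReal.ofReal (p / (p - 1)) * ENNReal.ofReal (a n) ^ 2 := fun n => by
    rw [hNdist, lintegral_const_mul' _ _ ENNReal.ofReal_ne_top]
    refine (mul_le_mul_right (mul_le_mul_right (lintegral_prod_ofReal_inner_sq_le_pow hw hΦm
      hΦindep hΦid hΦsq hΦ2 n) _) _).trans_eq ?_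
    rw [ENNReal.ofReal_div_pow_succ_mul_sq_mul_pow_eq hp (mul_nonneg hBw hBΨ), ← mul_assoc p Bw BΨ]
  calc _ = ∫⁻ ω, F (N ω) (fun j => Φ j ω) ∂μ := lintegral_congr fun ω => by
        rw [mul_assoc y, sq_mul_mul_prod_mul_of_sq_eq_one hy2, ENNReal.ofReal_mul (sq_nonneg _),
          ENNReal.ofReal_prod_of_nonneg fun j _ => sq_nonneg _]
    _ = ∑' n, μ {ω | N ω = n} * ∫⁻ ω, F n (fun j => Φ j ω) ∂μ :=
        lintegral_comp_of_indepFun_nat_eq_tsum hN (measurable_pi_lambda _ hΦm) hNΦ hF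
    _ ≤ ∑' n, ENNReal.ofReal (p / (p - 1)) * ENNReal.ofReal (a n) ^ 2 := ENNReal.tsum_le_tsum hterm
    _ = ENNReal.ofReal (p / (p - 1)) * ∑' n, ENNReal.ofReal (a n) ^ 2 := ENNReal.tsum_mul_left
    _ ≤ ENNReal.ofReal (p / (p - 1)) * ENNReal.ofReal ((∑' n, a n) ^ 2) := by
        gcongr
        exact ENNReal.tsum_ofReal_sq_le_ofReal_sq_tsum (fun n => by positivity) hplus
    _ = _ := (ENNReal.ofReal_mul (div_nonneg (by linarith) (by linarith))).symm

/-- **Lemma 2 (second-moment bound for `Grad_Length_Estimate`).** Fix `p > 1` and a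
power series `ℓ'(a) = Σ γ_n aⁿ` with `ℓ'₊(a) = Σ |γ_n| aⁿ`. Let `y ∈ {-1, +1}`, `w`
in a real Hilbert space with `‖w‖² ≤ B_w`, `N` geometric with parameter `p`, and
`(Φ_j)` i.i.d. `H`-valued random vectors independent of `N` with `E[‖Φ₁‖²] ≤ B_Ψ`
and `ℓ'₊(√(p·B_w·B_Ψ)) < ∞`. Then
`g̃ = y · γ_N · (p^(N+1)/(p-1)) · ∏_{j=1}^N (y·⟨w, Φ_j⟩)` satisfies
`E[g̃²] ≤ (p/(p-1)) · ℓ'₊(√(p·B_w·B_Ψ))²`. -/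
theorem grad_length_estimate_second_moment
    {Ω : Type*} [MeasurableSpace Ω] (μ : Measure Ω) [IsProbabilityMeasure μ]
    {H : Type*} [NormedAddCommGroup H] [InnerProductSpace ℝ H] [CompleteSpace H]
    [MeasurableSpace H] [BorelSpace H]
    (p : ℝ) (hp : 1 < p)
    (γ : ℕ → ℝ)
    (y : ℝ) (hy : y = 1 ∨ y = -1)
    (w : H) (Bw : ℝ) (hw : ‖w‖ ^ 2 ≤ Bw)
    (N : Ω → ℕ) (hN : Measurable N)
    (hNdist : ∀ n : ℕ, μ {ω | N ω = n} = ENNReal.ofReal ((p - 1) / p ^ (n + 1)))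
    (Φ : ℕ → Ω → H) (hΦm : ∀ j, Measurable (Φ j))
    (hΦindep : iIndepFun Φ μ)
    (hΦid : ∀ j, μ.map (Φ j) = μ.map (Φ 0))
    (hNΦ : IndepFun N (fun ω => fun j => Φ j ω) μ)
    (BΨ : ℝ) (hΦsq : Integrable (fun ω => ‖Φ 0 ω‖ ^ 2) μ)
    (hΦ2 : ∫ ω, ‖Φ 0 ω‖ ^ 2 ∂μ ≤ BΨ)
    (hplus : Summable (fun n : ℕ => |γ n| * Real.sqrt (p * Bw * BΨ) ^ n)) :
    ∫⁻ ω, ENNReal.ofReal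
        ((y * γ (N ω) * (p ^ (N ω + 1) / (p - 1)) *
          ∏ j ∈ Finset.range (N ω), (y * ⟪w, Φ j ω⟫)) ^ 2) ∂μ
      ≤ ENNReal.ofReal ((p / (p - 1)) *
          (∑' n : ℕ, |γ n| * Real.sqrt (p * Bw * BΨ) ^ n) ^ 2) :=
  grad_length_estimate_second_moment_general μ p hp γ y hy w Bw hw N hN hNdist Φ hΦm hΦindep hΦid
    hNΦ BΨ hΦsq hΦ2 hplus
end
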